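/- arXiv:2506.17216 — 4 statements merged into one kernel-verified Lean document; each statement's English description precedes it below -/
import Mathlib

section
/- If 𝒟 is a symmetric (15,8,4)-design of type (C1), then the full automorphism group Aut(𝒟) is isomorphic to the general linear group GL(4, F₂). -/
/-!
Under (C1) the characteristic vectors of the blocks, together with `0`, are closed under
addition, so they form a binary linear code `M` with 16 words, every nonzero word of weight 8.
The first and second moments of the weights, counted once over codewords and once over points,
show that the 15 coordinate functionals `x ↦ x p` on `M` are nonzero and pairwise distinct,
hence they are exactly the 15 nonzero elements of the dual of `M`. A permutation `σ` of the
points preserves the blocks iff `x ↦ x ∘ σ⁻¹` preserves `M`, and this identifies `Aut(𝒟)` with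
`GL(M) ≅ GL(4, 𝔽₂)`: an automorphism `ρ` of `M` permutes the nonzero functionals by
`f ↦ f ∘ ρ`, hence the points, and that permutation is the preimage of `ρ`.
-/

/-- A symmetric (15,8,4)-design: 15 blocks, each an 8-element subset of `Fin 15`,
any two distinct blocks meeting in exactly 4 points. -/
def IsDesign (B : Finset (Finset (Fin 15))) : Prop :=
  B.card = 15 ∧ (∀ b ∈ B, b.card = 8) ∧
    ∀ b ∈ B, ∀ b' ∈ B, b ≠ b' → (b ∩ b').card = 4

private lemma exists_preimage' {β : Type*} [Finite β] {P : β → Prop} {F : β → β}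
    (hF : Function.Injective F) (h : ∀ b, P b → P (F b)) {b : β} (hb : P b) :
    ∃ b', P b' ∧ F b' = b := by
  have hGinj : Function.Injective (fun x : {x // P x} => (⟨F x.1, h _ x.2⟩ : {x // P x})) := by
    intro x y hxy
    exact Subtype.ext (hF (congrArg Subtype.val hxy))
  obtain ⟨x, hx⟩ := (Finite.injective_iff_surjective.mp hGinj) ⟨b, hb⟩
  exact ⟨x.1, x.2, congrArg Subtype.val hx⟩

/-- The full automorphism group of the design with block family `B`. -/
def designAut (B : Finset (Finset (Fin 15))) : Subgroup (Equiv.Perm (Fin 15)) where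
  carrier := {σ | ∀ b ∈ B, b.image ⇑σ ∈ B}
  one_mem' := by intro b hb; simpa using hb
  mul_mem' := by
    intro a c ha hc b hb
    have := ha _ (hc b hb)
    simpa [Finset.image_image, Equiv.Perm.coe_mul] using this
  inv_mem' := by
    intro σ hσ b hb
    obtain ⟨b', hb', hEq⟩ := exists_preimage' (F := fun s => Finset.image (⇑σ) s)
      (Finset.image_injective σ.injective) (fun s hs => hσ s hs) hb
    rw [← hEq, Finset.image_image]
    have : ⇑σ⁻¹ ∘ ⇑σ = id := by
      funext x; simp
    rw [this, Finset.image_id]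
    exact hb'

/-- `O` is a center point of the block family `B`. -/
def IsCenter (B : Finset (Finset (Fin 15))) (O : Finset (Fin 15)) : Prop :=
  O ∈ B ∧ ∀ b ∈ B, b ≠ O → symmDiff O b ∈ B

open Finset

theorem ZMod.two_ne_zero_iff_eq_one {x : ZMod 2} : x ≠ 0 ↔ x = 1 := by
  decide +revert

theorem hammingNorm_eq_card_filter_eq_one {P : Type*} [Fintype P] (x : P → ZMod 2) :
    hammingNorm x = #{p | x p = 1} := by
  simp only [hammingNorm, ZMod.two_ne_zero_iff_eq_one]

section Functionals

variable {V : Type*} [AddCommGroup V] [Module (ZMod 2) V] [Fintype V]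

theorem two_mul_card_filter_eq_one {f : V →ₗ[ZMod 2] ZMod 2} (hf : f ≠ 0) :
    2 * #{v | f v = 1} = Fintype.card V := by
  obtain ⟨v, hv⟩ : ∃ v, f v ≠ 0 := by
    by_contra! h
    exact hf (LinearMap.ext h)
  have hfibers : #{v | f v = 0} = #{v | f v = 1} :=
    AddMonoidHom.card_fiber_eq_of_mem_range f.toAddMonoidHom ⟨0, map_zero f⟩
      ⟨v, ZMod.two_ne_zero_iff_eq_one.mp hv⟩
  have hsplit := card_filter_add_card_filter_not (s := univ) (fun v => f v = 0)
  simp only [ZMod.two_ne_zero_iff_eq_one, card_univ] at hsplit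
  omega

theorem four_mul_card_filter_eq_one_and_eq_one {f g : V →ₗ[ZMod 2] ZMod 2} (hf : f ≠ 0)
    (hg : g ≠ 0) (hfg : f ≠ g) :
    4 * #{v | f v = 1 ∧ g v = 1} = Fintype.card V := by
  have hsum : f + g ≠ 0 := fun h =>
    hfg (LinearMap.ext fun v => CharTwo.add_eq_zero.mp (LinearMap.congr_fun h v))
  -- `[a = 1] + [b = 1] = [a + b = 1] + 2 [a = 1 ∧ b = 1]` in `ZMod 2`
  have hcount : #{v | f v = 1} + #{v | g v = 1} =
      #{v | (f + g) v = 1} + 2 * #{v | f v = 1 ∧ g v = 1} := by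
    simp only [card_filter, mul_sum, ← sum_add_distrib, LinearMap.add_apply]
    refine sum_congr rfl fun v _ => ?_
    generalize f v = a
    generalize g v = b
    decide +revert
  have := two_mul_card_filter_eq_one hf
  have := two_mul_card_filter_eq_one hg
  have := two_mul_card_filter_eq_one hsum
  omega

end Functionals

def Submodule.coordFun {K P : Type*} [CommSemiring K] (M : Submodule K (P → K)) (p : P) :
    Module.Dual K M :=
  (LinearMap.proj p).comp M.subtype

@[simp]
theorem Submodule.coordFun_apply {K P : Type*} [CommSemiring K] (M : Submodule K (P → K)) (p : P)
    (m : M) : M.coordFun p m = (m : P → K) p :=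
  rfl

namespace Submodule

variable {P : Type*} [Fintype P] {M : Submodule (ZMod 2) (P → ZMod 2)} [Fintype M]

theorem sum_card_coordFun_eq_one :
    ∑ p, #{m : M | M.coordFun p m = 1} = ∑ m : M, hammingNorm (m : P → ZMod 2) := by
  simp only [hammingNorm_eq_card_filter_eq_one]
  exact sum_card_bipartiteAbove_eq_sum_card_bipartiteBelow _

theorem sum_card_coordFun_eq_one_and_eq_one :
    ∑ pq : P × P, #{m : M | M.coordFun pq.1 m = 1 ∧ M.coordFun pq.2 m = 1} =
      ∑ m : M, hammingNorm (m : P → ZMod 2) ^ 2 := by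
  simp only [hammingNorm_eq_card_filter_eq_one]
  refine (sum_card_bipartiteAbove_eq_sum_card_bipartiteBelow
    (r := fun (pq : P × P) (m : M) => M.coordFun pq.1 m = 1 ∧ M.coordFun pq.2 m = 1)).trans ?_
  refine sum_congr rfl fun m _ => ?_
  rw [sq, ← card_product, ← filter_product, univ_product_univ]
  rfl

theorem sum_two_mul_hammingNorm_pow (hcard : Fintype.card P + 1 = Fintype.card M)
    (hweight : ∀ m : M, m ≠ 0 → 2 * hammingNorm (m : P → ZMod 2) = Fintype.card M)
    {k : ℕ} (hk : k ≠ 0) :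
    ∑ m : M, (2 * hammingNorm (m : P → ZMod 2)) ^ k =
      Fintype.card P * Fintype.card M ^ k := by
  rw [← sum_erase (a := 0) _ (by simp [hk]),
    sum_congr rfl fun m hm => by rw [hweight m (ne_of_mem_erase hm)],
    sum_const, card_erase_of_mem (mem_univ _), card_univ, smul_eq_mul]
  congr 1
  omega

theorem coordFun_ne_zero (hcard : Fintype.card P + 1 = Fintype.card M)
    (hweight : ∀ m : M, m ≠ 0 → 2 * hammingNorm (m : P → ZMod 2) = Fintype.card M) (p : P) :
    M.coordFun p ≠ 0 := by
  have hle : ∀ q, 2 * #{m : M | M.coordFun q m = 1} ≤ Fintype.card M := by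
    intro q
    by_cases hq : M.coordFun q = 0
    · simp [hq]
    · exact (two_mul_card_filter_eq_one hq).le
  have hsum : ∑ q, 2 * #{m : M | M.coordFun q m = 1} = ∑ _q : P, Fintype.card M := by
    rw [← mul_sum, sum_card_coordFun_eq_one, mul_sum, sum_const, card_univ, smul_eq_mul]
    simpa using sum_two_mul_hammingNorm_pow hcard hweight one_ne_zero
  have hp := (sum_eq_sum_iff_of_le fun q _ => hle q).mp hsum p (mem_univ p)
  intro hzero
  simp only [hzero, LinearMap.zero_apply, zero_ne_one, filter_false, card_empty,
    mul_zero] at hp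
  exact Fintype.card_ne_zero hp.symm

theorem coordFun_injective (hcard : Fintype.card P + 1 = Fintype.card M)
    (hweight : ∀ m : M, m ≠ 0 → 2 * hammingNorm (m : P → ZMod 2) = Fintype.card M) :
    Function.Injective M.coordFun := by
  classical
  set N := Fintype.card M
  have hne := coordFun_ne_zero hcard hweight
  have hcount : ∀ pq : P × P, 4 * #{m : M | M.coordFun pq.1 m = 1 ∧ M.coordFun pq.2 m = 1} =
      if M.coordFun pq.1 = M.coordFun pq.2 then 2 * N else N := by
    rintro ⟨p, q⟩
    split_ifs with h
    · have := two_mul_card_filter_eq_one (hne q)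
      simp only [h, and_self]
      omega
    · exact four_mul_card_filter_eq_one_and_eq_one (hne p) (hne q) h
  have hle : ∀ pq : P × P, N + (if pq.1 = pq.2 then N else 0) ≤
      4 * #{m : M | M.coordFun pq.1 m = 1 ∧ M.coordFun pq.2 m = 1} := by
    rintro ⟨p, q⟩
    rw [hcount]
    split_ifs <;> simp_all <;> omega
  have hsum : ∑ pq : P × P, (N + if pq.1 = pq.2 then N else 0) =
      ∑ pq : P × P, 4 * #{m : M | M.coordFun pq.1 m = 1 ∧ M.coordFun pq.2 m = 1} := by
    have := sum_two_mul_hammingNorm_pow hcard hweight two_ne_zero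
    simp only [mul_pow] at this
    rw [← mul_sum, sum_card_coordFun_eq_one_and_eq_one, (by norm_num : 4 = 2 ^ 2), mul_sum,
      this, sum_add_distrib,
      Fintype.sum_prod_type fun pq : P × P => if pq.1 = pq.2 then N else 0]
    simp only [sum_ite_eq, mem_univ, if_true, sum_const, card_univ, Fintype.card_prod,
      smul_eq_mul]
    rw [show Fintype.card M = N from rfl, ← hcard]
    ring
  intro p q hpq
  have := (sum_eq_sum_iff_of_le fun pq _ => hle pq).mp hsum (p, q) (mem_univ _)
  rw [hcount, if_pos hpq] at this
  by_contra h
  simp only [h, if_false] at this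
  exact Fintype.card_ne_zero (α := M) (by omega)

theorem exists_coordFun_eq (hcard : Fintype.card P + 1 = Fintype.card M)
    (hweight : ∀ m : M, m ≠ 0 → 2 * hammingNorm (m : P → ZMod 2) = Fintype.card M)
    {f : Module.Dual (ZMod 2) M} (hf : f ≠ 0) : ∃ p, M.coordFun p = f := by
  let e := (Module.finBasis (ZMod 2) M).toDualEquiv
  have hsurj := surjOn_of_injOn_of_card_le (s := univ) (t := univ.erase 0)
    (fun p => e.symm (M.coordFun p))
    (fun p _ => mem_erase.mpr ⟨by simpa using coordFun_ne_zero hcard hweight p, mem_univ _⟩)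
    ((e.symm.injective.comp (coordFun_injective hcard hweight)).injOn)
    (by rw [card_erase_of_mem (mem_univ _), card_univ, card_univ]; omega)
  obtain ⟨p, -, hp⟩ := hsurj (mem_erase.mpr ⟨e.symm.map_ne_zero_iff.mpr hf, mem_univ _⟩)
  exact ⟨p, e.symm.injective hp⟩

end Submodule

section PermAction

variable {K P : Type*} [CommSemiring K] (M : Submodule K (P → K)) (G : Subgroup (Equiv.Perm P))

def Submodule.permHom (hG : ∀ σ ∈ G, ∀ x ∈ M, x ∘ ⇑σ ∈ M) : G →* (M ≃ₗ[K] M) where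
  toFun σ :=
    { toFun := fun m => ⟨m ∘ ⇑(σ⁻¹ : G).1, hG _ (σ⁻¹).2 m m.2⟩
      invFun := fun m => ⟨m ∘ ⇑σ.1, hG σ σ.2 m m.2⟩
      left_inv := fun m => by ext; simp
      right_inv := fun m => by ext; simp
      map_add' := fun _ _ => rfl
      map_smul' := fun _ _ => rfl }
  map_one' := rfl
  map_mul' _ _ := rfl

variable {M G}

@[simp]
theorem Submodule.permHom_apply_apply (hG : ∀ σ ∈ G, ∀ x ∈ M, x ∘ ⇑σ ∈ M) (σ : G) (m : M)
    (p : P) : (M.permHom G hG σ m : P → K) p = (m : P → K) (σ.1⁻¹ p) :=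
  rfl

theorem Submodule.permHom_injective (hG : ∀ σ ∈ G, ∀ x ∈ M, x ∘ ⇑σ ∈ M)
    (hinj : Function.Injective M.coordFun) : Function.Injective (M.permHom G hG) := by
  refine (injective_iff_map_eq_one _).mpr fun σ hσ => Subtype.ext (Equiv.ext fun p => ?_)
  have hfix : M.coordFun (σ.1⁻¹ p) = M.coordFun p := LinearMap.ext fun m => by
    simpa using congrArg (fun m : M => (m : P → K) p) (LinearEquiv.congr_fun hσ m)
  simpa using (Equiv.Perm.inv_eq_iff_eq.mp (hinj hfix)).symm

theorem Submodule.permHom_surjective (hG : ∀ σ, σ ∈ G ↔ ∀ x ∈ M, x ∘ ⇑σ ∈ M)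
    (hne : ∀ p, M.coordFun p ≠ 0) (hinj : Function.Injective M.coordFun)
    (hsurj : ∀ f : Module.Dual K M, f ≠ 0 → ∃ p, M.coordFun p = f) :
    Function.Surjective (M.permHom G fun σ hσ => (hG σ).mp hσ) := by
  intro ρ
  have hcomp_ne : ∀ (ρ : M ≃ₗ[K] M) (f : Module.Dual K M), f ≠ 0 → f ∘ₗ ρ.toLinearMap ≠ 0 :=
    fun ρ f hf h => hf (by ext m; simpa using LinearMap.congr_fun h (ρ.symm m))
  choose τ hτ using fun p => hsurj _ (hcomp_ne ρ _ (hne p))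
  have hτ_bij : Function.Bijective τ := by
    refine ⟨fun p q hpq => hinj ?_, fun q => ?_⟩
    · ext m
      simpa using LinearMap.congr_fun ((hτ p).symm.trans ((congrArg _ hpq).trans (hτ q)))
        (ρ.symm m)
    · obtain ⟨p, hp⟩ := hsurj _ (hcomp_ne ρ.symm _ (hne q))
      refine ⟨p, hinj ?_⟩
      ext m
      simpa [hτ p] using LinearMap.congr_fun hp (ρ m)
  let τ' := Equiv.ofBijective τ hτ_bij
  have hτ'_mem : τ' ∈ G := (hG τ').mpr fun x hx => by
    convert (ρ ⟨x, hx⟩).2 using 1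
    ext p
    simpa [τ'] using LinearMap.congr_fun (hτ p) ⟨x, hx⟩
  refine ⟨⟨τ'⁻¹, inv_mem hτ'_mem⟩, ?_⟩
  ext m p
  simpa [τ'] using LinearMap.congr_fun (hτ p) m

end PermAction

section BlockCode

variable {P : Type*} [DecidableEq P]

def charVec (s : Finset P) : P → ZMod 2 := fun p => if p ∈ s then 1 else 0

@[simp]
theorem charVec_apply_eq_one_iff {s : Finset P} {p : P} : charVec s p = 1 ↔ p ∈ s := by
  unfold charVec
  split_ifs <;> simp_all

@[simp]
theorem charVec_empty : charVec (∅ : Finset P) = 0 :=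
  funext fun _ => if_neg (notMem_empty _)

theorem charVec_injective : Function.Injective (charVec : Finset P → P → ZMod 2) :=
  fun s t h => ext fun p => by rw [← charVec_apply_eq_one_iff, h, charVec_apply_eq_one_iff]

theorem hammingNorm_charVec [Fintype P] (s : Finset P) : hammingNorm (charVec s) = #s := by
  simp [hammingNorm_eq_card_filter_eq_one]

theorem charVec_symmDiff (s t : Finset P) : charVec (symmDiff s t) = charVec s + charVec t := by
  funext p
  by_cases hs : p ∈ s <;> by_cases ht : p ∈ t <;> simp [charVec, mem_symmDiff, hs, ht]; decide

theorem charVec_image_perm (s : Finset P) (σ : Equiv.Perm P) :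
    charVec (s.image σ) = charVec s ∘ ⇑σ⁻¹ := by
  funext p
  simp only [charVec, Function.comp_apply, mem_image, Equiv.Perm.inv_def]
  congr 1
  exact propext ⟨fun ⟨a, ha, h⟩ => h ▸ by simpa, fun h => ⟨_, h, σ.apply_symm_apply p⟩⟩

def blockCode (B : Finset (Finset P)) : Submodule (ZMod 2) (P → ZMod 2) :=
  Submodule.span (ZMod 2) (charVec '' B)

variable {B : Finset (Finset P)}

theorem mem_blockCode_iff (hB : ∀ O ∈ B, ∀ b ∈ B, b ≠ O → symmDiff O b ∈ B)
    {x : P → ZMod 2} : x ∈ blockCode B ↔ x = 0 ∨ ∃ b ∈ B, charVec b = x := by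
  refine ⟨fun hx => ?_, ?_⟩
  · induction hx using Submodule.span_induction with
    | mem x hx =>
      obtain ⟨b, hb, rfl⟩ := hx
      exact Or.inr ⟨b, hb, rfl⟩
    | zero => exact Or.inl rfl
    | add x y _ _ hx hy =>
      obtain rfl | ⟨b, hb, rfl⟩ := hx
      · simpa using hy
      obtain rfl | ⟨b', hb', rfl⟩ := hy
      · simpa using Or.inr ⟨b, hb, rfl⟩
      rw [← charVec_symmDiff]
      by_cases h : b' = b
      · simp [h]
      · exact Or.inr ⟨_, hB b hb b' hb' h, rfl⟩
    | smul c x _ hx =>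
      obtain rfl | rfl : c = 0 ∨ c = 1 := by decide +revert
      · simp
      · simpa using hx
  · rintro (rfl | ⟨b, hb, rfl⟩)
    · exact zero_mem _
    · exact Submodule.subset_span ⟨b, hb, rfl⟩

theorem card_blockCode [Fintype P] [Fintype (blockCode B)]
    (hB : ∀ O ∈ B, ∀ b ∈ B, b ≠ O → symmDiff O b ∈ B) (hempty : ∅ ∉ B) :
    Fintype.card (blockCode B) = #B + 1 := by
  have h0 : (0 : P → ZMod 2) ∉ B.image charVec := by
    simpa [← charVec_empty, charVec_injective.eq_iff] using hempty
  rw [Fintype.card_of_subtype (insert 0 (B.image charVec)) fun x => by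
      simp [mem_blockCode_iff hB, eq_comm],
    card_insert_of_notMem h0, card_image_of_injective _ charVec_injective]

theorem forall_image_mem_iff (hB : ∀ O ∈ B, ∀ b ∈ B, b ≠ O → symmDiff O b ∈ B)
    (hempty : ∅ ∉ B) (σ : Equiv.Perm P) :
    (∀ b ∈ B, b.image σ ∈ B) ↔ ∀ x ∈ blockCode B, x ∘ ⇑σ⁻¹ ∈ blockCode B := by
  simp only [mem_blockCode_iff hB]
  constructor
  · rintro h x (rfl | ⟨b, hb, rfl⟩)
    · exact Or.inl rfl
    · exact Or.inr ⟨_, h b hb, charVec_image_perm b σ⟩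
  · intro h b hb
    obtain h0 | ⟨b', hb', hb'b⟩ := h _ (Or.inr ⟨b, hb, rfl⟩)
    · rw [← charVec_image_perm, ← charVec_empty, charVec_injective.eq_iff, image_eq_empty] at h0
      exact absurd (h0 ▸ hb) hempty
    · rw [← charVec_image_perm, charVec_injective.eq_iff] at hb'b
      exact hb'b ▸ hb'

end BlockCode

theorem mem_designAut_iff {B : Finset (Finset (Fin 15))} (hC1 : ∀ b ∈ B, IsCenter B b)
    (hempty : ∅ ∉ B) (σ : Equiv.Perm (Fin 15)) :
    σ ∈ designAut B ↔ ∀ x ∈ blockCode B, x ∘ ⇑σ ∈ blockCode B := by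
  rw [← inv_mem_iff]
  exact (forall_image_mem_iff (fun O hO => (hC1 O hO).2) hempty σ⁻¹).trans (by rw [inv_inv])

theorem nonempty_linearEquiv_mulEquiv_GL {K V : Type*} [Field K] [Fintype K] [AddCommGroup V]
    [Module K V] [Fintype V] {n : ℕ} (hV : Fintype.card V = Fintype.card K ^ n) :
    Nonempty ((V ≃ₗ[K] V) ≃* GL (Fin n) K) := by
  have hrank : Module.finrank K V = n :=
    Nat.pow_right_injective Fintype.one_lt_card ((Module.card_eq_pow_finrank).symm.trans hV)
  let e := LinearEquiv.ofFinrankEq (R := K) V (Fin n → K) (by simpa using hrank)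
  exact ⟨(LinearMap.GeneralLinearGroup.generalLinearEquiv K V).symm.trans
    ((LinearMap.GeneralLinearGroup.congrLinearEquiv e).trans Matrix.GeneralLinearGroup.toLin.symm)⟩

/-- a symmetric (15,8,4)-design of type (C1) (every block is a center
point) has full automorphism group isomorphic to `GL(4, 𝔽₂)`. -/
theorem stmt0 (B : Finset (Finset (Fin 15))) (hD : IsDesign B)
    (hC1 : ∀ b ∈ B, IsCenter B b) :
    Nonempty (↥(designAut B) ≃* Matrix.GeneralLinearGroup (Fin 4) (ZMod 2)) := by
  classical
  obtain ⟨hB15, hB8, -⟩ := hD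
  have hB : ∀ O ∈ B, ∀ b ∈ B, b ≠ O → symmDiff O b ∈ B := fun O hO => (hC1 O hO).2
  have hempty : ∅ ∉ B := fun h => by simpa using hB8 ∅ h
  have hcard : Fintype.card (blockCode B) = 16 := by rw [card_blockCode hB hempty, hB15]
  have hlen : Fintype.card (Fin 15) + 1 = Fintype.card (blockCode B) := by simp [hcard]
  have hweight : ∀ m : blockCode B, m ≠ 0 →
      2 * hammingNorm (m : Fin 15 → ZMod 2) = Fintype.card (blockCode B) := by
    rintro ⟨x, hx⟩ hx0
    obtain rfl | ⟨b, hb, rfl⟩ := (mem_blockCode_iff hB).mp hx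
    · exact absurd rfl hx0
    · rw [hammingNorm_charVec, hB8 b hb, hcard]
  have hinj := Submodule.coordFun_injective hlen hweight
  obtain ⟨e⟩ := nonempty_linearEquiv_mulEquiv_GL (K := ZMod 2) (V := blockCode B) (n := 4)
    (by simp [hcard])
  exact ⟨(MulEquiv.ofBijective _ ⟨Submodule.permHom_injective _ hinj,
    Submodule.permHom_surjective (mem_designAut_iff hC1 hempty)
      (Submodule.coordFun_ne_zero hlen hweight) hinj
      fun _ => Submodule.exists_coordFun_eq hlen hweight⟩).trans e⟩
end

section
/- Let δ be a permutation of the Fano plane F with ind(δ) = 0. Then for every line L of F there is exactly one δ-line disjoint from L. -/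
/-- The Fano plane: the 7 nonzero vectors of `(ZMod 2)³`. -/
abbrev FanoPoint : Type := {v : Fin 3 → ZMod 2 // v ≠ 0}

/-- A line of the Fano plane: a set `{x, y, x + y}` with `x ≠ y` nonzero. -/
def IsFanoLine (L : Set FanoPoint) : Prop :=
  ∃ x y : FanoPoint, x ≠ y ∧
    L = {z : FanoPoint | z.1 = x.1 ∨ z.1 = y.1 ∨ z.1 = x.1 + y.1}

/-- An automorphism of the Fano plane: a bijection mapping every line to a line. -/
def IsFanoAut (f : Equiv.Perm FanoPoint) : Prop :=
  ∀ L : Set FanoPoint, IsFanoLine L → IsFanoLine (⇑f '' L)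

/-- A `δ`-line: the preimage under `δ` of a line. -/
def IsDeltaLine (δ : Equiv.Perm FanoPoint) (S : Set FanoPoint) : Prop :=
  ∃ L : Set FanoPoint, IsFanoLine L ∧ S = ⇑δ ⁻¹' L

private lemma preserved_inv {P : Set FanoPoint → Prop} {f : Equiv.Perm FanoPoint}
    (h : ∀ S, P S → P (⇑f '' S)) : ∀ S, P S → P (⇑f⁻¹ '' S) := by
  intro S hS
  obtain ⟨S', hS', hEq⟩ := exists_preimage' (F := fun T => ⇑f '' T)
    (Set.image_injective.mpr f.injective) h hS
  rw [← hEq, Set.image_image]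
  have : (fun x => f⁻¹ (f x)) = fun x : FanoPoint => x := by
    funext x; simp
  rw [this, Set.image_id']
  exact hS'

/-- The full automorphism group of the Fano plane. -/
def fanoAutGroup : Subgroup (Equiv.Perm FanoPoint) where
  carrier := {f | IsFanoAut f}
  one_mem' := by intro L hL; simpa using hL
  mul_mem' := by
    intro a b ha hb L hL
    rw [Equiv.Perm.coe_mul, Set.image_comp]
    exact ha _ (hb L hL)
  inv_mem' := by
    intro f hf
    exact preserved_inv hf

/-- `G_δ`: the group of automorphisms of the Fano plane mapping every `δ`-line to a
`δ`-line. -/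
def Gdelta (δ : Equiv.Perm FanoPoint) : Subgroup (Equiv.Perm FanoPoint) where
  carrier := {f | IsFanoAut f ∧ ∀ S, IsDeltaLine δ S → IsDeltaLine δ (⇑f '' S)}
  one_mem' := by
    constructor
    · intro L hL; simpa using hL
    · intro S hS; simpa using hS
  mul_mem' := by
    rintro a b ⟨ha1, ha2⟩ ⟨hb1, hb2⟩
    constructor
    · intro L hL
      rw [Equiv.Perm.coe_mul, Set.image_comp]
      exact ha1 _ (hb1 L hL)
    · intro S hS
      rw [Equiv.Perm.coe_mul, Set.image_comp]
      exact ha2 _ (hb2 S hS)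
  inv_mem' := by
    rintro f ⟨h1, h2⟩
    exact ⟨preserved_inv h1, preserved_inv h2⟩

/-- `ind(δ)`: the number of lines `L` such that `δ(L)` is a line. -/
noncomputable def fanoIndex (δ : Equiv.Perm FanoPoint) : ℕ :=
  {L : Set FanoPoint | IsFanoLine L ∧ IsFanoLine (⇑δ '' L)}.ncard


set_option synthInstance.maxSize 2048 in
set_option maxHeartbeats 4000000 in
private lemma vecU : ∀ a : Fin 3 → ZMod 2, a≠0 → ∀ b : Fin 3 → ZMod 2, b≠0→a≠b →
    ∀ c : Fin 3 → ZMod 2, c≠0→b≠c→a≠c→a+b+c≠0→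
    ∀ u : Fin 3 → ZMod 2, u≠0→u≠a→u≠b→u≠c → ∀ v : Fin 3 → ZMod 2, v≠0→v≠a→v≠b→v≠c→u≠v→
    u+v≠a→u+v≠b→u+v≠c→
    ∀ w : Fin 3 → ZMod 2, (w=u ∨ w=v ∨ w=u+v) ↔ (w=a+b ∨ w=b+c ∨ w=(a+b)+(b+c)) := by decide

set_option synthInstance.maxSize 2048 in
set_option maxHeartbeats 1000000 in
private lemma vecE : ∀ a : Fin 3 → ZMod 2, a≠0 → ∀ b : Fin 3 → ZMod 2, b≠0→a≠b →
    ∀ c : Fin 3 → ZMod 2, c≠0→b≠c→a≠c→a+b+c≠0→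
    (a+b≠0 ∧ b+c≠0 ∧ a+b≠b+c ∧ a≠a+b ∧ a≠b+c ∧ a≠(a+b)+(b+c) ∧ b≠a+b ∧ b≠b+c ∧
      b≠(a+b)+(b+c) ∧ c≠a+b ∧ c≠b+c ∧ c≠(a+b)+(b+c)) := by decide

private lemma vec2 : ∀ a b : Fin 3 → ZMod 2, a≠b → a+b≠0 := by decide
private lemma vec3 : ∀ a b c : Fin 3 → ZMod 2, a+b+c = 0 → c = a+b := by decide
private lemma vecne : ∀ a b : Fin 3 → ZMod 2, b≠0 → a≠a+b := by decide
private lemma vecne2 : ∀ a b : Fin 3 → ZMod 2, a≠0 → b≠a+b := by decide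

/-- if `ind(δ) = 0`, then for every line `L` there is exactly one `δ`-line
disjoint from `L`. -/
theorem stmt9 (δ : Equiv.Perm FanoPoint) (h0 : fanoIndex δ = 0) :
    ∀ L : Set FanoPoint, IsFanoLine L →
      ∃! S : Set FanoPoint, IsDeltaLine δ S ∧ Disjoint S L := by
  intro L hL
  obtain ⟨x, y, hxy, hLdef⟩ := hL
  have hxy1 : x.1 ≠ y.1 := fun h => hxy (Subtype.ext h)
  have hz0 : x.1 + y.1 ≠ 0 := vec2 _ _ hxy1
  set z : FanoPoint := ⟨x.1 + y.1, hz0⟩ with hzdef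
  have hxz : x ≠ z := fun h => vecne x.1 y.1 y.2 (congrArg Subtype.val h)
  have hyz : y ≠ z := fun h => vecne2 x.1 y.1 x.2 (congrArg Subtype.val h)
  set a : FanoPoint := δ x with hadef
  set b : FanoPoint := δ y with hbdef
  set c : FanoPoint := δ z with hcdef
  have hab : a ≠ b := fun h => hxy (δ.injective h)
  have hbc : b ≠ c := fun h => hyz (δ.injective h)
  have hac : a ≠ c := fun h => hxz (δ.injective h)
  have hab1 : a.1 ≠ b.1 := fun h => hab (Subtype.ext h)
  have hbc1 : b.1 ≠ c.1 := fun h => hbc (Subtype.ext h)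
  have hac1 : a.1 ≠ c.1 := fun h => hac (Subtype.ext h)
  have hLmem : ∀ w : FanoPoint, w ∈ L ↔ (w = x ∨ w = y ∨ w = z) := by
    intro w
    rw [hLdef]
    simp only [Set.mem_setOf_eq]
    constructor
    · rintro (h | h | h)
      exacts [Or.inl (Subtype.ext h), Or.inr (Or.inl (Subtype.ext h)),
        Or.inr (Or.inr (Subtype.ext h))]
    · rintro (rfl | rfl | rfl)
      exacts [Or.inl rfl, Or.inr (Or.inl rfl), Or.inr (Or.inr rfl)]
  have habc : a.1 + b.1 + c.1 ≠ 0 := by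
    intro hsum
    have hc1 : c.1 = a.1 + b.1 := vec3 _ _ _ hsum
    have hline : IsFanoLine (⇑δ '' L) := by
      refine ⟨a, b, hab, ?_⟩
      ext w
      simp only [Set.mem_setOf_eq]
      constructor
      · rintro ⟨t, htL, rfl⟩
        rcases (hLmem t).1 htL with rfl | rfl | rfl
        exacts [Or.inl rfl, Or.inr (Or.inl rfl), Or.inr (Or.inr hc1)]
      · rintro (h | h | h)
        · exact ⟨x, (hLmem x).2 (Or.inl rfl), (Subtype.ext h : w = a) ▸ rfl⟩
        · exact ⟨y, (hLmem y).2 (Or.inr (Or.inl rfl)), (Subtype.ext h : w = b) ▸ rfl⟩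
        · exact ⟨z, (hLmem z).2 (Or.inr (Or.inr rfl)),
            (Subtype.ext (h.trans hc1.symm) : w = c) ▸ rfl⟩
    have hmem' : L ∈ {M : Set FanoPoint | IsFanoLine M ∧ IsFanoLine (⇑δ '' M)} :=
      ⟨⟨x, y, hxy, hLdef⟩, hline⟩
    have hempty : {M : Set FanoPoint | IsFanoLine M ∧ IsFanoLine (⇑δ '' M)} = ∅ :=
      (Set.ncard_eq_zero (Set.toFinite _)).mp h0
    rw [hempty] at hmem'
    exact hmem'
  obtain ⟨h1, h2, h3, h4, h5, h6, h7, h8, h9, h10, h11, h12⟩ :=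
    vecE a.1 a.2 b.1 b.2 hab1 c.1 c.2 hbc1 hac1 habc
  set p : FanoPoint := ⟨a.1 + b.1, h1⟩ with hpdef
  set q : FanoPoint := ⟨b.1 + c.1, h2⟩ with hqdef
  have hpq : p ≠ q := fun h => h3 (congrArg Subtype.val h)
  set L' : Set FanoPoint := {w : FanoPoint | w.1 = p.1 ∨ w.1 = q.1 ∨ w.1 = p.1 + q.1}
    with hL'def
  have hL'line : IsFanoLine L' := ⟨p, q, hpq, rfl⟩
  have habcL' : ∀ w : FanoPoint, (w = a ∨ w = b ∨ w = c) → w ∉ L' := by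
    rintro w (rfl | rfl | rfl) hmem <;>
      simp only [hL'def, Set.mem_setOf_eq] at hmem
    · rcases hmem with h | h | h
      exacts [h4 h, h5 h, h6 h]
    · rcases hmem with h | h | h
      exacts [h7 h, h8 h, h9 h]
    · rcases hmem with h | h | h
      exacts [h10 h, h11 h, h12 h]
  refine ⟨⇑δ ⁻¹' L', ⟨⟨L', hL'line, rfl⟩, ?_⟩, ?_⟩
  · rw [Set.disjoint_left]
    intro w hwS hwL
    rcases (hLmem w).1 hwL with rfl | rfl | rfl
    exacts [habcL' a (Or.inl rfl) hwS, habcL' b (Or.inr (Or.inl rfl)) hwS,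
      habcL' c (Or.inr (Or.inr rfl)) hwS]
  · rintro S' ⟨⟨M, hMline, rfl⟩, hdisj⟩
    obtain ⟨u0, v0, huv, hMdef⟩ := hMline
    have key : ∀ m : FanoPoint, m ∈ M → m.1 ≠ a.1 ∧ m.1 ≠ b.1 ∧ m.1 ≠ c.1 := by
      intro m hm
      have hmS : δ.symm m ∈ ⇑δ ⁻¹' M := by
        simp only [Set.mem_preimage, Equiv.apply_symm_apply]
        exact hm
      have hnotL : δ.symm m ∉ L := Set.disjoint_left.mp hdisj hmS
      refine ⟨fun h => ?_, fun h => ?_, fun h => ?_⟩ <;> apply hnotL <;> rw [hLmem]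
      · left
        rw [show m = a from Subtype.ext h, hadef]
        exact δ.symm_apply_apply x
      · right; left
        rw [show m = b from Subtype.ext h, hbdef]
        exact δ.symm_apply_apply y
      · right; right
        rw [show m = c from Subtype.ext h, hcdef]
        exact δ.symm_apply_apply z
    have hu0 : u0 ∈ M := by rw [hMdef]; exact Or.inl rfl
    have hv0 : v0 ∈ M := by rw [hMdef]; exact Or.inr (Or.inl rfl)
    have huv1 : u0.1 ≠ v0.1 := fun h => huv (Subtype.ext h)
    have ht0nz : u0.1 + v0.1 ≠ 0 := vec2 _ _ huv1
    have ht0 : (⟨u0.1 + v0.1, ht0nz⟩ : FanoPoint) ∈ M := by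
      rw [hMdef]; exact Or.inr (Or.inr rfl)
    obtain ⟨hua, hub, huc⟩ := key u0 hu0
    obtain ⟨hva, hvb, hvc⟩ := key v0 hv0
    obtain ⟨hta, htb, htc⟩ := key _ ht0
    have main := vecU a.1 a.2 b.1 b.2 hab1 c.1 c.2 hbc1 hac1 habc
      u0.1 u0.2 hua hub huc v0.1 v0.2 hva hvb hvc huv1 hta htb htc
    have hML' : M = L' := by
      rw [hMdef, hL'def]
      ext w
      simp only [Set.mem_setOf_eq]
      exact main w.1
    rw [hML']
end

section
/- Let δ be a permutation of the Fano plane F with ind(δ) = 0, let L be a line of F, and let p be a point of F lying neither on L nor on the unique δ-line disjoint from L. Then G_δ contains an automorphism f of F such that f(p) = p and f permutes the three points of L cyclically (the restriction of f to L is a 3-cycle). -/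
/-!
The δ-lines are the lines of a second Steiner triple system on the seven points, with
third-point map `s = pullbackOp δ third`, and `ind(δ) = 0` says that it shares no line with the
Fano plane. As `p` lies on no δ-line missing `L`, the involution `s p` sends the three points
`p + x` (`x ∈ L`) into `L`, so by counting it sends `L` onto them; as no line is shared, after
relabelling `L = {a, b, c}` the δ-lines through `p` are `{p, a, p + b}`, `{p, b, p + c}` and
`{p, c, p + a}`. In the basis `a, b, p` these three lines and the absence of common lines force
all seven δ-lines, and the linear map `a ↦ b ↦ c ↦ a` fixing `p` permutes them.
-/

open Function

theorem Function.Involutive.mapsTo_of_ncard_le {α : Type*} [Finite α] {g : α → α}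
    (hg : Involutive g) {A B : Set α} (h : Set.MapsTo g A B) (hcard : B.ncard ≤ A.ncard) :
    Set.MapsTo g B A := by
  have hAB : g '' A = B := Set.eq_of_subset_of_ncard_le h.image_subset
    (by rwa [Set.ncard_image_of_injective _ hg.injective])
  rintro _ hy
  obtain ⟨x, hx, rfl⟩ := hAB ▸ hy
  rwa [hg x]

section SteinerQuasigroup

variable {α β : Type*}

/-- `t x y` is the third point of the block through `x ≠ y` of a Steiner triple system,
and `t x x = x`. -/
structure IsSteinerQuasigroup (t : α → α → α) : Prop where
  idem : ∀ x, t x x = x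
  comm : ∀ x y, t x y = t y x
  left_inv : ∀ x y, t x (t x y) = y

def IsLine (t : α → α → α) (S : Set α) : Prop :=
  ∃ x y, x ≠ y ∧ S = {x, y, t x y}

def pullbackOp (e : α ≃ β) (t : β → β → β) (x y : α) : α :=
  e.symm (t (e x) (e y))

namespace IsSteinerQuasigroup

variable {s t : α → α → α} {a b c p x y : α}

theorem involutive (ht : IsSteinerQuasigroup t) (x : α) : Involutive (t x) :=
  ht.left_inv x

theorem apply_apply_right (ht : IsSteinerQuasigroup t) (x y : α) : t y (t x y) = x := by
  rw [ht.comm x y, ht.left_inv]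

theorem apply_ne_left (ht : IsSteinerQuasigroup t) (h : x ≠ y) : t x y ≠ x := fun hxy =>
  h (by rw [← ht.left_inv x y, hxy, ht.idem])

theorem apply_ne_right (ht : IsSteinerQuasigroup t) (h : x ≠ y) : t x y ≠ y := by
  rw [ht.comm]
  exact ht.apply_ne_left h.symm

theorem block_eq (ht : IsSteinerQuasigroup t) (h : t a b = c) :
    t b a = c ∧ t a c = b ∧ t c a = b ∧ t b c = a ∧ t c b = a := by
  subst h
  exact ⟨ht.comm b a, ht.left_inv a b, by rw [ht.comm, ht.left_inv], ht.apply_apply_right a b,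
    by rw [ht.comm, ht.apply_apply_right]⟩

theorem apply_mem_block (ht : IsSteinerQuasigroup t) (hx : x ∈ ({a, b, t a b} : Set α))
    (hy : y ∈ ({a, b, t a b} : Set α)) : t x y ∈ ({a, b, t a b} : Set α) := by
  obtain ⟨h₁, h₂, h₃, h₄, h₅⟩ := ht.block_eq (rfl : t a b = t a b)
  rcases hx with rfl | rfl | rfl <;> rcases hy with rfl | rfl | rfl <;>
    simp [ht.idem, h₁, h₂, h₃, h₄, h₅]

theorem apply_not_mem_block (ht : IsSteinerQuasigroup t) (h : t a b = c)
    (hx : x ∈ ({a, b, c} : Set α)) (hy : y ∉ ({a, b, c} : Set α)) :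
    t x y ∉ ({a, b, c} : Set α) := by
  subst h
  intro hxy
  exact hy (ht.left_inv x y ▸ ht.apply_mem_block hx hxy)

theorem apply_eq_of_not_mem_blocks (hs : IsSteinerQuasigroup s) {a' b' c' z : α}
    (hne : s x y ≠ t x y) (h : s a b = c) (h' : s a' b' = c') (hx : x ∈ ({a, b, c} : Set α))
    (hy : y ∉ ({a, b, c} : Set α)) (hy' : y ∈ ({a', b', c'} : Set α))
    (hx' : x ∉ ({a', b', c'} : Set α))
    (hz : ∀ w, w ∉ ({a, b, c} : Set α) → w ∉ ({a', b', c'} : Set α) → w ≠ t x y → w = z) :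
    s x y = z :=
  hz _ (hs.apply_not_mem_block h hx hy) (hs.comm x y ▸ hs.apply_not_mem_block h' hy' hx') hne

theorem apply_eq_of_mem_block (hs : IsSteinerQuasigroup s) (ht : IsSteinerQuasigroup t)
    (h : s a b = t a b) (hx : x ∈ ({a, b, t a b} : Set α)) (hy : y ∈ ({a, b, t a b} : Set α)) :
    s x y = t x y := by
  generalize hc : t a b = c at h hx hy
  obtain ⟨hs₁, hs₂, hs₃, hs₄, hs₅⟩ := hs.block_eq h
  obtain ⟨ht₁, ht₂, ht₃, ht₄, ht₅⟩ := ht.block_eq hc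
  rcases hx with rfl | rfl | rfl <;> rcases hy with rfl | rfl | rfl <;>
    simp only [hs.idem, ht.idem, h, hc, hs₁, hs₂, hs₃, hs₄, hs₅, ht₁, ht₂, ht₃, ht₄, ht₅]

theorem eq_of_forall_mem_block (hs : IsSteinerQuasigroup s) (ht : IsSteinerQuasigroup t)
    (P : List (α × α)) (hP : ∀ q ∈ P, s q.1 q.2 = t q.1 q.2)
    (hcover : ∀ x y, ∃ q ∈ P, x ∈ ({q.1, q.2, t q.1 q.2} : Set α) ∧
      y ∈ ({q.1, q.2, t q.1 q.2} : Set α)) :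
    s = t := by
  funext x y
  obtain ⟨q, hq, hx, hy⟩ := hcover x y
  exact hs.apply_eq_of_mem_block ht (hP q hq) hx hy

theorem mapsTo_of_forall_apply_mem [Finite α] (hs : IsSteinerQuasigroup s)
    (ht : IsSteinerQuasigroup t) (hp : p ∉ ({a, b, t a b} : Set α))
    (hmeet : ∀ x, x ≠ p → x ∉ ({a, b, t a b} : Set α) → s p x ∈ ({a, b, t a b} : Set α)) :
    Set.MapsTo (s p) {a, b, t a b} (t p '' {a, b, t a b}) := by
  refine (hs.involutive p).mapsTo_of_ncard_le ?_
    (Set.ncard_image_of_injective _ (ht.involutive p).injective).ge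
  rintro _ ⟨x, hx, rfl⟩
  refine hmeet _ (fun hxp => hp ?_) (fun hxL => hp ?_)
  · rwa [← ht.left_inv p x, hxp, ht.idem] at hx
  · rw [← ht.apply_apply_right p x]
    exact ht.apply_mem_block hx hxL

theorem apply_eq_of_mapsTo (hs : IsSteinerQuasigroup s) (ht : IsSteinerQuasigroup t)
    (hne : ∀ x y, x ≠ y → s x y ≠ t x y) (hab : a ≠ b) (hp : p ∉ ({a, b, t a b} : Set α))
    (hσ : Set.MapsTo (s p) {a, b, t a b} (t p '' {a, b, t a b})) (ha : s p a = t p b) :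
    s p b = t p (t a b) ∧ s p (t a b) = t p a := by
  simp only [Set.mem_insert_iff, Set.mem_singleton_iff, not_or] at hp
  obtain ⟨hpa, hpb, hpc⟩ := hp
  have hinj := (hs.involutive p).injective
  obtain ⟨x, hx, hxc⟩ := hσ (by simp : t a b ∈ ({a, b, t a b} : Set α))
  have hc : s p (t a b) = t p a := by
    rcases hx with rfl | rfl | rfl
    · exact hxc.symm
    · exact absurd (hinj (hxc.symm.trans ha.symm)) (ht.apply_ne_left hab)
    · exact absurd hxc.symm (hne _ _ hpc)
  obtain ⟨y, hy, hyb⟩ := hσ (by simp : b ∈ ({a, b, t a b} : Set α))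
  refine ⟨?_, hc⟩
  rcases hy with rfl | rfl | rfl
  · exact absurd (hinj (hyb.symm.trans hc.symm)) (ht.apply_ne_right hab).symm
  · exact absurd hyb.symm (hne _ _ hpb)
  · exact hyb.symm

theorem exists_oriented_block [Finite α] (hs : IsSteinerQuasigroup s)
    (ht : IsSteinerQuasigroup t) (hne : ∀ x y, x ≠ y → s x y ≠ t x y) (hab : a ≠ b)
    (hp : p ∉ ({a, b, t a b} : Set α))
    (hmeet : ∀ x, x ≠ p → x ∉ ({a, b, t a b} : Set α) → s p x ∈ ({a, b, t a b} : Set α)) :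
    ∃ a' b', a' ≠ b' ∧ ({a, b, t a b} : Set α) = {a', b', t a' b'} ∧
      s p a' = t p b' ∧ s p b' = t p (t a' b') ∧ s p (t a' b') = t p a' := by
  have hσ := hs.mapsTo_of_forall_apply_mem ht hp hmeet
  have hpa : p ≠ a := fun h => hp (h ▸ Set.mem_insert p _)
  obtain ⟨x, hx, hxa⟩ := hσ (Set.mem_insert a _)
  rcases hx with hx | hx | hx <;> rw [hx] at hxa
  · exact absurd hxa.symm (hne _ _ hpa)
  · exact ⟨a, b, hab, rfl, hxa.symm, hs.apply_eq_of_mapsTo ht hne hab hp hσ hxa.symm⟩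
  · have hac : a ≠ t a b := (ht.apply_ne_left hab).symm
    have hL : ({a, b, t a b} : Set α) = {a, t a b, t a (t a b)} := by
      rw [ht.left_inv, Set.pair_comm (t a b) b]
    rw [hL] at hp hσ
    exact ⟨a, t a b, hac, hL, hxa.symm, hs.apply_eq_of_mapsTo ht hne hac hp hσ hxa.symm⟩

end IsSteinerQuasigroup

theorem isSteinerQuasigroup_pullbackOp {t : β → β → β} (ht : IsSteinerQuasigroup t)
    (e : α ≃ β) : IsSteinerQuasigroup (pullbackOp e t) where
  idem x := by simp [pullbackOp, ht.idem]
  comm x y := by simp [pullbackOp, ht.comm (e x)]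
  left_inv x y := by simp [pullbackOp, ht.left_inv]

theorem pullbackOp_eq_self {t : α → α → α} {e : Equiv.Perm α} (h : Semiconj₂ e t t) :
    pullbackOp e t = t := by
  funext x y
  simp [pullbackOp, ← h.eq]

theorem pullbackOp_apply_eq {s t : α → α → α} {e : Equiv.Perm α} (h : Semiconj₂ e t t)
    {x y u v : α} (hxy : s (e x) (e y) = t (e u) (e v)) : pullbackOp e s x y = t u v := by
  simp [pullbackOp, hxy, ← h.eq]

theorem Function.Semiconj₂.conj_of_pullbackOp {t : α → α → α} {e g : Equiv.Perm α}
    (h : Semiconj₂ g (pullbackOp e t) (pullbackOp e t)) : Semiconj₂ ⇑(e * g * e⁻¹) t t := by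
  intro x y
  simpa [pullbackOp] using congrArg e (h (e⁻¹ x) (e⁻¹ y))

theorem isLine_pullbackOp_iff {t : β → β → β} (e : α ≃ β) {S : Set α} :
    IsLine (pullbackOp e t) S ↔ ∃ T, IsLine t T ∧ S = e ⁻¹' T := by
  constructor
  · rintro ⟨x, y, hxy, rfl⟩
    refine ⟨{e x, e y, t (e x) (e y)}, ⟨e x, e y, e.injective.ne hxy, rfl⟩, ?_⟩
    simp [← e.image_symm_eq_preimage, Set.image_insert_eq, pullbackOp]
  · rintro ⟨T, ⟨u, v, huv, rfl⟩, rfl⟩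
    refine ⟨e.symm u, e.symm v, e.symm.injective.ne huv, ?_⟩
    simp [← e.image_symm_eq_preimage, Set.image_insert_eq, pullbackOp]

theorem Function.Semiconj₂.isLine_image {t : α → α → α} {f : α → α} (h : Semiconj₂ f t t)
    (hf : Injective f) {S : Set α} (hS : IsLine t S) : IsLine t (f '' S) := by
  obtain ⟨x, y, hxy, rfl⟩ := hS
  exact ⟨f x, f y, hf.ne hxy, by simp [Set.image_insert_eq, h.eq]⟩

end SteinerQuasigroup

namespace FanoPoint

def third (x y : FanoPoint) : FanoPoint :=
  if h : x.1 + y.1 = 0 then x else ⟨x.1 + y.1, h⟩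

set_option synthInstance.maxSize 4000 in
theorem isSteinerQuasigroup_third : IsSteinerQuasigroup third :=
  ⟨by decide, by decide, by decide⟩

set_option synthInstance.maxSize 4000 in
theorem val_third : ∀ x y : FanoPoint, x ≠ y → (third x y).1 = x.1 + y.1 := by
  decide

theorem isFanoLine_iff {S : Set FanoPoint} : IsFanoLine S ↔ IsLine third S := by
  refine exists₂_congr fun x y => and_congr_right fun hxy => ?_
  rw [show {z : FanoPoint | z.1 = x.1 ∨ z.1 = y.1 ∨ z.1 = x.1 + y.1} = {x, y, third x y} by
    ext z
    simp [Subtype.ext_iff, val_third x y hxy]]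

theorem isDeltaLine_iff (δ : Equiv.Perm FanoPoint) {S : Set FanoPoint} :
    IsDeltaLine δ S ↔ IsLine (pullbackOp δ third) S := by
  simp only [IsDeltaLine, isFanoLine_iff, isLine_pullbackOp_iff]

theorem mem_Gdelta {δ f : Equiv.Perm FanoPoint} (hF : Semiconj₂ f third third)
    (hD : Semiconj₂ f (pullbackOp δ third) (pullbackOp δ third)) : f ∈ Gdelta δ :=
  ⟨fun _ hL => isFanoLine_iff.2 (hF.isLine_image f.injective (isFanoLine_iff.1 hL)),
    fun _ hS => (isDeltaLine_iff δ).2 (hD.isLine_image f.injective ((isDeltaLine_iff δ).1 hS))⟩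

theorem pullbackOp_ne_third {δ : Equiv.Perm FanoPoint} (h0 : fanoIndex δ = 0)
    {x y : FanoPoint} (hxy : x ≠ y) : pullbackOp δ third x y ≠ third x y := by
  intro h
  have hL : IsFanoLine {x, y, third x y} := isFanoLine_iff.2 ⟨x, y, hxy, rfl⟩
  have hδL : IsFanoLine (δ '' {x, y, third x y}) := by
    refine isFanoLine_iff.2 ⟨δ x, δ y, δ.injective.ne hxy, ?_⟩
    rw [← h]
    simp [pullbackOp, Set.image_insert_eq]
  exact ((Set.ncard_eq_zero (Set.toFinite _)).1 h0).subset ⟨hL, hδL⟩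

theorem pullbackOp_apply_mem {δ : Equiv.Perm FanoPoint} {L : Set FanoPoint} {p x : FanoPoint}
    (hpS : ∀ S : Set FanoPoint, IsDeltaLine δ S → Disjoint S L → p ∉ S) (hpL : p ∉ L)
    (hxp : x ≠ p) (hxL : x ∉ L) : pullbackOp δ third p x ∈ L := by
  by_contra h
  refine hpS _ ((isDeltaLine_iff δ).2 ⟨p, x, hxp.symm, rfl⟩) ?_ (Set.mem_insert p _)
  simp only [Set.disjoint_insert_left, Set.disjoint_singleton_left]
  exact ⟨hpL, hxL, h⟩

def e₁ : FanoPoint := ⟨![1, 0, 0], by decide⟩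
def e₂ : FanoPoint := ⟨![0, 1, 0], by decide⟩
def e₃ : FanoPoint := ⟨![0, 0, 1], by decide⟩
def e₁₂ : FanoPoint := ⟨![1, 1, 0], by decide⟩
def e₁₃ : FanoPoint := ⟨![1, 0, 1], by decide⟩
def e₂₃ : FanoPoint := ⟨![0, 1, 1], by decide⟩
def e₁₂₃ : FanoPoint := ⟨![1, 1, 1], by decide⟩

def frameVec (a b p : FanoPoint) (v : Fin 3 → ZMod 2) : Fin 3 → ZMod 2 :=
  v 0 • a.1 + v 1 • b.1 + v 2 • p.1

theorem frameVec_add (a b p : FanoPoint) (u v : Fin 3 → ZMod 2) :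
    frameVec a b p (u + v) = frameVec a b p u + frameVec a b p v := by
  simp only [frameVec, Pi.add_apply, add_smul]
  abel

set_option synthInstance.maxSize 4000 in
theorem frameVec_ne_zero : ∀ a b p : FanoPoint, a ≠ b →
    p ∉ ({a, b, third a b} : Set FanoPoint) → ∀ v : FanoPoint, frameVec a b p v.1 ≠ 0 := by
  decide

section Frame

variable {a b p : FanoPoint} (hab : a ≠ b) (hp : p ∉ ({a, b, third a b} : Set FanoPoint))

theorem frameVec_injective : Injective fun v : FanoPoint =>
    (⟨frameVec a b p v.1, frameVec_ne_zero a b p hab hp v⟩ : FanoPoint) := by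
  intro u v huv
  by_contra huv'
  apply frameVec_ne_zero a b p hab hp (third u v)
  have huv : frameVec a b p u.1 = frameVec a b p v.1 := congrArg Subtype.val huv
  rw [val_third u v huv', frameVec_add, huv]
  exact CharTwo.add_self_eq_zero _

noncomputable def frame : Equiv.Perm FanoPoint :=
  Equiv.ofBijective _ (Finite.injective_iff_bijective.1 (frameVec_injective hab hp))

theorem val_frame (v : FanoPoint) : (frame hab hp v).1 = frameVec a b p v.1 := rfl

theorem semiconj₂_frame : Semiconj₂ (frame hab hp) third third := by
  intro x y
  rcases eq_or_ne x y with rfl | hxy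
  · simp only [isSteinerQuasigroup_third.idem]
  · apply Subtype.ext
    rw [val_third _ _ ((frame hab hp).injective.ne hxy), val_frame, val_frame, val_frame,
      val_third _ _ hxy, frameVec_add]

theorem frame_e₁ : frame hab hp e₁ = a := Subtype.ext (by simp [val_frame, frameVec, e₁])

theorem frame_e₂ : frame hab hp e₂ = b := Subtype.ext (by simp [val_frame, frameVec, e₂])

theorem frame_e₃ : frame hab hp e₃ = p := Subtype.ext (by simp [val_frame, frameVec, e₃])

theorem frame_e₁₂ : frame hab hp e₁₂ = third a b := by
  rw [show e₁₂ = third e₁ e₂ by decide, (semiconj₂_frame hab hp).eq, frame_e₁, frame_e₂]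

end Frame

noncomputable def rot : Equiv.Perm FanoPoint :=
  frame (a := e₂) (b := e₁₂) (p := e₃) (by decide) (by decide)

/-- Its lines are `{e₃, e₁, e₂₃}`, `{e₃, e₂, e₁₂₃}`, `{e₃, e₁₂, e₁₃}`, `{e₁, e₂, e₁₃}`,
`{e₂, e₁₂, e₂₃}`, `{e₁₂, e₁, e₁₂₃}` and `{e₁₃, e₂₃, e₁₂₃}`. -/
def modelThird : FanoPoint → FanoPoint → FanoPoint :=
  pullbackOp (Equiv.swap e₂₃ e₁ * Equiv.swap e₁ e₁₃ * Equiv.swap e₁₃ e₁₂₃) third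

set_option synthInstance.maxSize 4000 in
theorem semiconj₂_rot_modelThird : Semiconj₂ rot modelThird modelThird := by
  unfold Semiconj₂
  decide

set_option synthInstance.maxSize 4000 in
theorem eq_modelThird {s : FanoPoint → FanoPoint → FanoPoint} (hs : IsSteinerQuasigroup s)
    (hne : ∀ x y, x ≠ y → s x y ≠ third x y) (h₁ : s e₃ e₁ = third e₃ e₂)
    (h₂ : s e₃ e₂ = third e₃ e₁₂) (h₃ : s e₃ e₁₂ = third e₃ e₁) : s = modelThird := by
  have h₄ : s e₁ e₂ = e₁₃ := hs.apply_eq_of_not_mem_blocks (hne _ _ (by decide)) h₁ h₂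
    (by decide) (by decide) (by decide) (by decide) (by decide)
  have h₅ : s e₂ e₁₂ = e₂₃ := hs.apply_eq_of_not_mem_blocks (hne _ _ (by decide)) h₂ h₃
    (by decide) (by decide) (by decide) (by decide) (by decide)
  have h₆ : s e₁₂ e₁ = e₁₂₃ := hs.apply_eq_of_not_mem_blocks (hne _ _ (by decide)) h₃ h₁
    (by decide) (by decide) (by decide) (by decide) (by decide)
  have h₇ : s e₁₃ e₂₃ = e₁₂₃ := hs.apply_eq_of_not_mem_blocks (hne _ _ (by decide)) h₄ h₁
    (by decide) (by decide) (by decide) (by decide) (by decide)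
  refine hs.eq_of_forall_mem_block (isSteinerQuasigroup_pullbackOp isSteinerQuasigroup_third _)
    [(e₃, e₁), (e₃, e₂), (e₃, e₁₂), (e₁, e₂), (e₂, e₁₂), (e₁₂, e₁), (e₁₃, e₂₃)] ?_ (by decide)
  simp only [List.forall_mem_cons, List.not_mem_nil, IsEmpty.forall_iff, implies_true, and_true]
  exact ⟨h₁.trans (by decide), h₂.trans (by decide), h₃.trans (by decide), h₄.trans (by decide),
    h₅.trans (by decide), h₆.trans (by decide), h₇.trans (by decide)⟩

theorem exists_rotation {s : FanoPoint → FanoPoint → FanoPoint} (hs : IsSteinerQuasigroup s)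
    (hne : ∀ x y, x ≠ y → s x y ≠ third x y) {a b p : FanoPoint} (hab : a ≠ b)
    (hp : p ∉ ({a, b, third a b} : Set FanoPoint)) (h₁ : s p a = third p b)
    (h₂ : s p b = third p (third a b)) (h₃ : s p (third a b) = third p a) :
    ∃ f : Equiv.Perm FanoPoint, Semiconj₂ f third third ∧ Semiconj₂ f s s ∧
      f p = p ∧ f a = b ∧ f b = third a b ∧ f (third a b) = a := by
  set φ := frame hab hp
  have hφ : Semiconj₂ φ third third := semiconj₂_frame hab hp
  have hne' (x y : FanoPoint) (hxy : x ≠ y) : pullbackOp φ s x y ≠ third x y := by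
    rw [ne_eq, ← congrFun₂ (pullbackOp_eq_self hφ) x y]
    exact φ.symm.injective.ne (hne _ _ (φ.injective.ne hxy))
  have h₁' : pullbackOp φ s e₃ e₁ = third e₃ e₂ :=
    pullbackOp_apply_eq hφ <| by rwa [frame_e₃, frame_e₁, frame_e₂]
  have h₂' : pullbackOp φ s e₃ e₂ = third e₃ e₁₂ :=
    pullbackOp_apply_eq hφ <| by rwa [frame_e₃, frame_e₂, frame_e₁₂]
  have h₃' : pullbackOp φ s e₃ e₁₂ = third e₃ e₁ :=
    pullbackOp_apply_eq hφ <| by rwa [frame_e₃, frame_e₁₂, frame_e₁]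
  have hφs := eq_modelThird (isSteinerQuasigroup_pullbackOp hs φ) hne' h₁' h₂' h₃'
  have hφ_inv (x : FanoPoint) {y : FanoPoint} (h : φ x = y) : φ⁻¹ y = x := by
    rw [Equiv.Perm.inv_eq_iff_eq, h]
  refine ⟨φ * rot * φ⁻¹, Semiconj₂.conj_of_pullbackOp ?_,
    Semiconj₂.conj_of_pullbackOp (hφs ▸ semiconj₂_rot_modelThird), ?_, ?_, ?_, ?_⟩
  · rw [pullbackOp_eq_self hφ]
    exact semiconj₂_frame _ _
  all_goals simp only [Equiv.Perm.mul_apply]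
  · rw [hφ_inv _ (frame_e₃ hab hp), show rot e₃ = e₃ from frame_e₃ _ _, frame_e₃]
  · rw [hφ_inv _ (frame_e₁ hab hp), show rot e₁ = e₂ from frame_e₁ _ _, frame_e₂]
  · rw [hφ_inv _ (frame_e₂ hab hp), show rot e₂ = e₁₂ from frame_e₂ _ _, frame_e₁₂]
  · rw [hφ_inv _ (frame_e₁₂ hab hp), show rot e₁₂ = e₁ by decide, frame_e₁]

end FanoPoint

/-- if `ind(δ) = 0`, `L` is a line and `p` lies neither on `L` nor on the
`δ`-line disjoint from `L`, then `G_δ` contains an automorphism fixing `p` and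
permuting the three points of `L` cyclically. -/
theorem stmt10 (δ : Equiv.Perm FanoPoint) (h0 : fanoIndex δ = 0)
    (L : Set FanoPoint) (hL : IsFanoLine L) (p : FanoPoint) (hpL : p ∉ L)
    (hpS : ∀ S : Set FanoPoint, IsDeltaLine δ S → Disjoint S L → p ∉ S) :
    ∃ f ∈ Gdelta δ, f p = p ∧ ⇑f '' L = L ∧ ∀ x ∈ L, f x ≠ x := by
  have ht := FanoPoint.isSteinerQuasigroup_third
  have hs := isSteinerQuasigroup_pullbackOp ht δ
  have hne (x y : FanoPoint) (hxy : x ≠ y) := FanoPoint.pullbackOp_ne_third h0 hxy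
  obtain ⟨a₀, b₀, hab₀, rfl⟩ := FanoPoint.isFanoLine_iff.1 hL
  obtain ⟨a, b, hab, hLab, h₁, h₂, h₃⟩ := hs.exists_oriented_block ht hne hab₀ hpL
    fun x hxp hxL => FanoPoint.pullbackOp_apply_mem hpS hpL hxp hxL
  rw [hLab] at hpL ⊢
  obtain ⟨f, hF, hD, hfp, hfa, hfb, hfc⟩ := FanoPoint.exists_rotation hs hne hab hpL h₁ h₂ h₃
  refine ⟨f, FanoPoint.mem_Gdelta hF hD, hfp, ?_, ?_⟩
  · rw [Set.image_insert_eq, Set.image_insert_eq, Set.image_singleton, hfa, hfb, hfc]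
    ext
    simp only [Set.mem_insert_iff, Set.mem_singleton_iff]
    tauto
  · rintro x (rfl | rfl | rfl)
    · rw [hfa]
      exact hab.symm
    · rw [hfb]
      exact ht.apply_ne_right hab
    · rw [hfc]
      exact (ht.apply_ne_left hab).symm
end

section
/- Let δ be a permutation of the Fano plane F with ind(δ) = 1, and let L be the unique line of F that is also a δ-line. Then the set of elements of G_δ that fix every point of L is a normal subgroup of G_δ of order 4 isomorphic to the Klein four-group (ZMod 2) × (ZMod 2). -/
/- ===== auxiliary material for stmt12 ===== -/

set_option synthInstance.maxSize 2000
set_option maxHeartbeats 4000000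

namespace Fano12

abbrev V := Fin 3 → ZMod 2

def wm (x y u : V) : Prop := u = 0 ∨ u = x ∨ u = y ∨ u = x + y

instance (x y u : V) : Decidable (wm x y u) := by unfold wm; infer_instance

lemma Dself : ∀ u v : V, u + v + v = u := by decide
lemma Dcancel : ∀ u v : V, u + (u + v) = v := by decide
lemma Dne : ∀ u v : V, v ≠ 0 → u + v ≠ u := by decide
lemma Dnz : ∀ u v : V, u ≠ v → u + v ≠ 0 := by decide
lemma Dchar : ∀ p q v : V, (p + v) + (q + v) = p + q := by decide
lemma Dgen : ∀ w s t : V, (w + s) + (w + t) = t + s := by decide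
lemma Dw2 : ∀ x y u v : V, wm x y u → wm x y v → wm x y (u + v) := by decide
lemma Dw3 : ∀ x y u v : V, x ≠ 0 → y ≠ 0 → x ≠ y → ¬wm x y u → ¬wm x y v → wm x y (u + v) := by
  decide
lemma Dw0 (x y : V) : wm x y 0 := Or.inl rfl
lemma Dlw : ∀ x y u : V, x ≠ 0 → y ≠ 0 → x ≠ y →
    ((u = x ∨ u = y ∨ u = x + y) ↔ (wm x y u ∧ u ≠ 0)) := by decide
lemma Dline2 : ∀ x y a b : V, x ≠ 0 → y ≠ 0 → x ≠ y →
    (a = x ∨ a = y ∨ a = x + y) → (b = x ∨ b = y ∨ b = x + y) → a ≠ b →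
    ((x = a ∨ x = b ∨ x = a + b) ∧ (y = a ∨ y = b ∨ y = a + b) ∧
      (x + y = a ∨ x + y = b ∨ x + y = a + b)) := by decide
lemma Dexw : ∀ x y : V, ∃ w : V, w ≠ 0 ∧ ¬wm x y w := by decide
lemma Doff : ∀ x y w u : V, x ≠ 0 → y ≠ 0 → x ≠ y → ¬wm x y w → ¬wm x y u →
    (u = w ∨ u = w + x ∨ u = w + y ∨ u = w + (x + y)) := by decide

def vvf (x y : V) (p : ZMod 2 × ZMod 2) : V :=
  (if p.1 = 1 then x else 0) + (if p.2 = 1 then y else 0)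

lemma Dvv_wm : ∀ x y : V, ∀ p, wm x y (vvf x y p) := by decide
lemma Dvv_add : ∀ x y : V, ∀ p q, vvf x y (p + q) = vvf x y p + vvf x y q := by decide
lemma Dvv_inj : ∀ x y : V, ∀ p q, x ≠ 0 → y ≠ 0 → x ≠ y → vvf x y p = vvf x y q → p = q := by
  decide
lemma Dvv_surj : ∀ x y v : V, x ≠ 0 → y ≠ 0 → x ≠ y → wm x y v → ∃ p, vvf x y p = v := by decide

lemma Dw4 (x y u v : V) (hu : ¬wm x y u) (hv : wm x y v) : ¬wm x y (u + v) := fun h => by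
  have h2 := Dw2 x y (u + v) v h hv
  rw [Dself] at h2
  exact hu h2

def TV (x y v : V) (u : V) : V := if wm x y u then u else u + v

lemma TV_wm {x y v u : V} (h : wm x y u) : TV x y v u = u := if_pos h
lemma TV_nwm {x y v u : V} (h : ¬wm x y u) : TV x y v u = u + v := if_neg h

lemma TV_zero (x y u : V) : TV x y 0 u = u := by
  unfold TV; split
  · rfl
  · exact add_zero u

lemma TV_invol (x y v : V) (hv : wm x y v) (u : V) : TV x y v (TV x y v u) = u := by
  by_cases h : wm x y u
  · rw [TV_wm h, TV_wm h]
  · rw [TV_nwm h, TV_nwm (Dw4 x y u v h hv), Dself]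

lemma TV_nz (x y v : V) (hv : wm x y v) (u : V) (hu : u ≠ 0) : TV x y v u ≠ 0 := by
  by_cases h : wm x y u
  · rw [TV_wm h]; exact hu
  · rw [TV_nwm h]
    intro h0
    exact (Dw4 x y u v h hv) (h0 ▸ Dw0 x y)

lemma TV_add (x y v : V) (hx : x ≠ 0) (hy : y ≠ 0) (hxy : x ≠ y) (hv : wm x y v) (p q : V) :
    TV x y v (p + q) = TV x y v p + TV x y v q := by
  by_cases hp : wm x y p <;> by_cases hq : wm x y q
  · rw [TV_wm (Dw2 x y p q hp hq), TV_wm hp, TV_wm hq]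
  · rw [TV_wm hp, TV_nwm hq, TV_nwm (by rw [add_comm]; exact Dw4 x y q p hq hp), add_assoc]
  · rw [TV_nwm hp, TV_wm hq, TV_nwm (Dw4 x y p q hp hq), add_right_comm]
  · rw [TV_wm (Dw3 x y p q hx hy hxy hp hq), TV_nwm hp, TV_nwm hq, Dchar]

lemma TV_comp (x y v1 v2 : V) (h1 : wm x y v1) (h2 : wm x y v2) (u : V) :
    TV x y (v1 + v2) u = TV x y v1 (TV x y v2 u) := by
  by_cases h : wm x y u
  · rw [TV_wm h, TV_wm h, TV_wm h]
  · rw [TV_nwm h, TV_nwm h, TV_nwm (Dw4 x y u v2 h h2), add_assoc, add_comm v2 v1, ← add_assoc,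
      add_assoc u v1 v2, add_comm v1 v2, ← add_assoc]

lemma TV_eq_iff (x y v : V) (hv : wm x y v) {a b : V} : TV x y v a = b ↔ a = TV x y v b :=
  ⟨fun h => by rw [← h, TV_invol x y v hv], fun h => by rw [h, TV_invol x y v hv]⟩

def TP (x y v : V) (hv : wm x y v) : Equiv.Perm FanoPoint where
  toFun u := ⟨TV x y v u.1, TV_nz x y v hv u.1 u.2⟩
  invFun u := ⟨TV x y v u.1, TV_nz x y v hv u.1 u.2⟩
  left_inv u := Subtype.ext (TV_invol x y v hv u.1)
  right_inv u := Subtype.ext (TV_invol x y v hv u.1)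

lemma TP_apply (x y v : V) (hv : wm x y v) (u : FanoPoint) :
    (TP x y v hv u).1 = TV x y v u.1 := rfl

lemma TP_sq (x y v : V) (hv : wm x y v) : TP x y v hv * TP x y v hv = 1 :=
  Equiv.ext fun u => Subtype.ext (TV_invol x y v hv u.1)

lemma TP_one (x y : V) (hv : wm x y 0) : TP x y 0 hv = 1 :=
  Equiv.ext fun u => Subtype.ext (TV_zero x y u.1)

lemma sq_apply {f : Equiv.Perm FanoPoint} (h : f * f = 1) (u : FanoPoint) : f (f u) = u := by
  have := congrArg (fun g : Equiv.Perm FanoPoint => g u) h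
  simpa using this

lemma mem_image_invol {f : Equiv.Perm FanoPoint} (hf : ∀ u, f (f u) = u) {S : Set FanoPoint}
    {z : FanoPoint} : z ∈ ⇑f '' S ↔ f z ∈ S := by
  constructor
  · rintro ⟨u, hu, rfl⟩; rwa [hf]
  · intro h; exact ⟨f z, h, hf z⟩

lemma TP_fano (x y v : V) (hx : x ≠ 0) (hy : y ≠ 0) (hxy : x ≠ y) (hv : wm x y v) :
    IsFanoAut (TP x y v hv) := by
  rintro L ⟨p, q, hpq, rfl⟩
  refine ⟨TP x y v hv p, TP x y v hv q, fun h => hpq ((TP x y v hv).injective h), ?_⟩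
  ext z
  rw [mem_image_invol (sq_apply (TP_sq x y v hv))]
  show (TP x y v hv z).1 = p.1 ∨ (TP x y v hv z).1 = q.1 ∨ (TP x y v hv z).1 = p.1 + q.1 ↔ _
  simp only [TP_apply, TV_eq_iff x y v hv, TV_add x y v hx hy hxy hv]
  exact Iff.rfl

lemma two_elt {α : Type*} {p q u z v : α} (hz : z = p ∨ z = q) (hv : v = p ∨ v = q)
    (hu : u = p ∨ u = q) (hzu : z ≠ u) (hvu : v ≠ u) : z = v := by
  rcases hz with rfl | rfl <;> rcases hv with rfl | rfl <;> rcases hu with rfl | rfl <;> simp_all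

lemma detLem (x y w v u z : V) (hx : x ≠ 0) (hy : y ≠ 0) (hxy : x ≠ y)
    (hw : ¬wm x y w) (hv : wm x y v) (hv0 : v ≠ 0)
    (hu : ¬wm x y u) (hz : ¬wm x y z) (hzu : z ≠ u) (hzw : z ≠ w) (hzt : z ≠ w + v)
    (huw : u ≠ w) (hut : u ≠ w + v) : z = u + v := by
  have huvw : ¬wm x y (u + v) := Dw4 x y u v hu hv
  have huvu : u + v ≠ u := Dne u v hv0
  have huvnw : u + v ≠ w := fun h => hut (by rw [← h, Dself])
  have huvnt : u + v ≠ w + v := fun h => huw (add_right_cancel h)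
  rcases hv with hv | hv | hv | hv
  · exact absurd hv hv0
  · -- v = x
    subst v
    have eu2 : u = w + y ∨ u = w + (x + y) := by
      rcases Doff x y w u hx hy hxy hw hu with h | h | h | h
      · exact absurd h huw
      · exact absurd h hut
      · exact Or.inl h
      · exact Or.inr h
    have ez2 : z = w + y ∨ z = w + (x + y) := by
      rcases Doff x y w z hx hy hxy hw hz with h | h | h | h
      · exact absurd h hzw
      · exact absurd h hzt
      · exact Or.inl h
      · exact Or.inr h
    have euv2 : u + x = w + y ∨ u + x = w + (x + y) := by
      rcases Doff x y w (u + x) hx hy hxy hw huvw with h | h | h | h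
      · exact absurd h huvnw
      · exact absurd h huvnt
      · exact Or.inl h
      · exact Or.inr h
    exact two_elt ez2 euv2 eu2 hzu huvu
  · -- v = y
    subst v
    have eu2 : u = w + x ∨ u = w + (x + y) := by
      rcases Doff x y w u hx hy hxy hw hu with h | h | h | h
      · exact absurd h huw
      · exact Or.inl h
      · exact absurd h hut
      · exact Or.inr h
    have ez2 : z = w + x ∨ z = w + (x + y) := by
      rcases Doff x y w z hx hy hxy hw hz with h | h | h | h
      · exact absurd h hzw
      · exact Or.inl h
      · exact absurd h hzt
      · exact Or.inr h
    have euv2 : u + y = w + x ∨ u + y = w + (x + y) := by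
      rcases Doff x y w (u + y) hx hy hxy hw huvw with h | h | h | h
      · exact absurd h huvnw
      · exact Or.inl h
      · exact absurd h huvnt
      · exact Or.inr h
    exact two_elt ez2 euv2 eu2 hzu huvu
  · -- v = x + y
    subst v
    have eu2 : u = w + x ∨ u = w + y := by
      rcases Doff x y w u hx hy hxy hw hu with h | h | h | h
      · exact absurd h huw
      · exact Or.inl h
      · exact Or.inr h
      · exact absurd h hut
    have ez2 : z = w + x ∨ z = w + y := by
      rcases Doff x y w z hx hy hxy hw hz with h | h | h | h
      · exact absurd h hzw
      · exact Or.inl h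
      · exact Or.inr h
      · exact absurd h hzt
    have euv2 : u + (x + y) = w + x ∨ u + (x + y) = w + y := by
      rcases Doff x y w (u + (x + y)) hx hy hxy hw huvw with h | h | h | h
      · exact absurd h huvnw
      · exact Or.inl h
      · exact Or.inr h
      · exact absurd h huvnt
    exact two_elt ez2 euv2 eu2 hzu huvu

lemma E_aut (M : Set FanoPoint) (hM : IsFanoLine M) (g : Equiv.Perm FanoPoint)
    (hfixg : ∀ p ∈ M, g p = p) (hsq : g * g = 1)
    (hfpf : g = 1 ∨ ∀ p ∉ M, g p ≠ p) : IsFanoAut g := by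
  rcases hfpf with rfl | hfpf
  · intro L hL; simpa using hL
  obtain ⟨xp, yp, hne, rfl⟩ := hM
  have hx : xp.1 ≠ 0 := xp.2
  have hy : yp.1 ≠ 0 := yp.2
  have hxy : xp.1 ≠ yp.1 := fun h => hne (Subtype.ext h)
  have hg2 := sq_apply hsq
  have hmem : ∀ p : FanoPoint,
      p ∈ {z : FanoPoint | z.1 = xp.1 ∨ z.1 = yp.1 ∨ z.1 = xp.1 + yp.1} ↔ wm xp.1 yp.1 p.1 := by
    intro p
    constructor
    · intro h; exact ((Dlw xp.1 yp.1 p.1 hx hy hxy).mp h).1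
    · intro h; exact (Dlw xp.1 yp.1 p.1 hx hy hxy).mpr ⟨h, p.2⟩
  have hoff : ∀ u : FanoPoint, ¬wm xp.1 yp.1 u.1 → ¬wm xp.1 yp.1 (g u).1 := by
    intro u hu hgu
    have h1 : g (g u) = g u := hfixg _ ((hmem _).mpr hgu)
    rw [hg2] at h1
    rw [← h1] at hgu
    exact hu hgu
  obtain ⟨w, hw0, hww⟩ := Dexw xp.1 yp.1
  have hgW_off : ¬wm xp.1 yp.1 (g ⟨w, hw0⟩).1 := hoff ⟨w, hw0⟩ hww
  have hgWW : g ⟨w, hw0⟩ ≠ ⟨w, hw0⟩ := hfpf ⟨w, hw0⟩ (fun h => hww ((hmem _).mp h))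
  have hvW : wm xp.1 yp.1 (w + (g ⟨w, hw0⟩).1) := Dw3 _ _ _ _ hx hy hxy hww hgW_off
  have hv0 : w + (g ⟨w, hw0⟩).1 ≠ 0 := Dnz _ _ (fun h => hgWW (Subtype.ext h.symm))
  have key : g = TP xp.1 yp.1 (w + (g ⟨w, hw0⟩).1) hvW := by
    apply Equiv.ext
    intro u
    apply Subtype.ext
    show (g u).1 = TV xp.1 yp.1 (w + (g ⟨w, hw0⟩).1) u.1
    by_cases hu : wm xp.1 yp.1 u.1
    · rw [TV_wm hu, hfixg u ((hmem u).mpr hu)]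
    · rw [TV_nwm hu]
      by_cases huw : u.1 = w
      · have hueq : u = ⟨w, hw0⟩ := Subtype.ext huw
        rw [hueq]
        show (g ⟨w, hw0⟩).1 = w + (w + (g ⟨w, hw0⟩).1)
        exact (Dcancel w (g ⟨w, hw0⟩).1).symm
      · by_cases hut : u.1 = (g ⟨w, hw0⟩).1
        · have hueq : u = g ⟨w, hw0⟩ := Subtype.ext hut
          rw [hueq, hg2]
          show w = (g ⟨w, hw0⟩).1 + (w + (g ⟨w, hw0⟩).1)
          rw [add_comm w (g ⟨w, hw0⟩).1]
          exact (Dcancel (g ⟨w, hw0⟩).1 w).symm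
        · have hz := hoff u hu
          have hzu : (g u).1 ≠ u.1 := fun h => hfpf u (fun hm => hu ((hmem u).mp hm)) (Subtype.ext h)
          have hzw : (g u).1 ≠ w := by
            intro h
            have h1 : g u = ⟨w, hw0⟩ := Subtype.ext h
            have h2 : u = g ⟨w, hw0⟩ := by rw [← h1, hg2]
            exact hut (congrArg Subtype.val h2)
          have hzt : (g u).1 ≠ (g ⟨w, hw0⟩).1 := by
            intro h
            have h2 := g.injective (Subtype.ext h : g u = g ⟨w, hw0⟩)
            exact huw (congrArg Subtype.val h2)
          have hT : (g ⟨w, hw0⟩).1 = w + (w + (g ⟨w, hw0⟩).1) := (Dcancel w _).symm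
          exact detLem xp.1 yp.1 w (w + (g ⟨w, hw0⟩).1) u.1 (g u).1 hx hy hxy hww hvW hv0 hu hz
            hzu hzw (by rw [← hT]; exact hzt) huw (by rw [← hT]; exact hut)
  rw [key]
  exact TP_fano _ _ _ hx hy hxy hvW

lemma E_conj (Lset : Set FanoPoint) (f σ : Equiv.Perm FanoPoint)
    (h1 : ∀ p ∈ Lset, f p = p) (h2 : f * f = 1) (h3 : f = 1 ∨ ∀ p ∉ Lset, f p ≠ p) :
    (∀ p ∈ ⇑σ '' Lset, (σ * f * σ⁻¹) p = p) ∧ ((σ * f * σ⁻¹) * (σ * f * σ⁻¹) = 1) ∧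
      ((σ * f * σ⁻¹) = 1 ∨ ∀ p ∉ ⇑σ '' Lset, (σ * f * σ⁻¹) p ≠ p) := by
  refine ⟨?_, ?_, ?_⟩
  · rintro p ⟨q, hq, rfl⟩
    simp [Equiv.Perm.mul_apply, h1 q hq]
  · have hcalc : (σ * f * σ⁻¹) * (σ * f * σ⁻¹) = σ * (f * f) * σ⁻¹ := by group
    rw [hcalc, h2]
    group
  · rcases h3 with rfl | h3
    · left; group
    · right
      intro p hp hcon
      have hq : σ⁻¹ p ∉ Lset := fun h => hp ⟨σ⁻¹ p, h, by simp⟩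
      apply h3 _ hq
      have hc : σ (f (σ⁻¹ p)) = p := by simpa [Equiv.Perm.mul_apply] using hcon
      calc f (σ⁻¹ p) = σ⁻¹ (σ (f (σ⁻¹ p))) := by simp
        _ = σ⁻¹ p := by rw [hc]

end Fano12

/-- if `ind(δ) = 1` and `L` is the unique line which is also a `δ`-line,
then the elements of `G_δ` fixing every point of `L` form a normal subgroup of `G_δ` of
order 4 isomorphic to the Klein four-group `(ZMod 2) × (ZMod 2)`. -/
theorem stmt12 (δ : Equiv.Perm FanoPoint) (h1 : fanoIndex δ = 1)
    (L : Set FanoPoint) (hL : IsFanoLine L) (hLd : IsDeltaLine δ L)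
    (hLuniq : ∀ L' : Set FanoPoint, IsFanoLine L' → IsDeltaLine δ L' → L' = L) :
    Nat.card ↥(Gdelta δ ⊓ fixingSubgroup (Equiv.Perm FanoPoint) L) = 4 ∧
    Nonempty (↥(Gdelta δ ⊓ fixingSubgroup (Equiv.Perm FanoPoint) L) ≃*
      Multiplicative (ZMod 2 × ZMod 2)) ∧
    (∀ g ∈ Gdelta δ, ∀ n ∈ Gdelta δ ⊓ fixingSubgroup (Equiv.Perm FanoPoint) L,
      g * n * g⁻¹ ∈ Gdelta δ ⊓ fixingSubgroup (Equiv.Perm FanoPoint) L) := by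
    classical
  open Fano12 in
  obtain ⟨xp, yp, hnexy, hLeq⟩ := hL
  have hx : xp.1 ≠ 0 := xp.2
  have hy : yp.1 ≠ 0 := yp.2
  have hxy : xp.1 ≠ yp.1 := fun h => hnexy (Subtype.ext h)
  obtain ⟨M, hM, hLM⟩ := hLd
  have hdLM : ⇑δ '' L = M := by rw [hLM, Set.image_preimage_eq M δ.surjective]
  obtain ⟨w, hw0, hww⟩ := Fano12.Dexw xp.1 yp.1
  have hmemL : ∀ p : FanoPoint, p ∈ L ↔ Fano12.wm xp.1 yp.1 p.1 := by
    intro p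
    rw [hLeq]
    constructor
    · intro h; exact ((Fano12.Dlw xp.1 yp.1 p.1 hx hy hxy).mp h).1
    · intro h; exact (Fano12.Dlw xp.1 yp.1 p.1 hx hy hxy).mpr ⟨h, p.2⟩
  have hGmem : ∀ f : Equiv.Perm FanoPoint,
      f ∈ Gdelta δ ↔ (IsFanoAut f ∧ ∀ S, IsDeltaLine δ S → IsDeltaLine δ (⇑f '' S)) :=
    fun f => Iff.rfl
  -- every translation TP lies in the subgroup
  have hTmem : ∀ (v : Fano12.V) (hv : Fano12.wm xp.1 yp.1 v),
      Fano12.TP xp.1 yp.1 v hv ∈ Gdelta δ ⊓ fixingSubgroup (Equiv.Perm FanoPoint) L := by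
    intro v hv
    have hTfix : ∀ p ∈ L, Fano12.TP xp.1 yp.1 v hv p = p :=
      fun p hp => Subtype.ext (Fano12.TV_wm ((hmemL p).mp hp))
    have hTsq := Fano12.TP_sq xp.1 yp.1 v hv
    have hTfpf : Fano12.TP xp.1 yp.1 v hv = 1 ∨ ∀ p ∉ L, Fano12.TP xp.1 yp.1 v hv p ≠ p := by
      by_cases hv0 : v = 0
      · subst hv0
        exact Or.inl (Fano12.TP_one xp.1 yp.1 hv)
      · right
        intro p hp hcon
        have hpw : ¬ Fano12.wm xp.1 yp.1 p.1 := fun h => hp ((hmemL p).mpr h)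
        have hc := congrArg Subtype.val hcon
        rw [Fano12.TP_apply, Fano12.TV_nwm hpw] at hc
        exact Fano12.Dne p.1 v hv0 hc
    refine Subgroup.mem_inf.mpr ⟨(hGmem _).mpr ⟨Fano12.TP_fano xp.1 yp.1 v hx hy hxy hv, ?_⟩, ?_⟩
    · rintro S ⟨M0, hM0, rfl⟩
      have hE := Fano12.E_conj L (Fano12.TP xp.1 yp.1 v hv) δ hTfix hTsq hTfpf
      rw [hdLM] at hE
      have hg : IsFanoAut (δ * Fano12.TP xp.1 yp.1 v hv * δ⁻¹) := Fano12.E_aut M hM _ hE.1 hE.2.1 hE.2.2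
      refine ⟨⇑(δ * Fano12.TP xp.1 yp.1 v hv * δ⁻¹) '' M0, hg M0 hM0, ?_⟩
      ext z
      rw [Fano12.mem_image_invol (Fano12.sq_apply hTsq), Set.mem_preimage, Set.mem_preimage,
        Fano12.mem_image_invol (Fano12.sq_apply hE.2.1)]
      simp [Equiv.Perm.mul_apply]
    · rw [mem_fixingSubgroup_iff]
      intro p hp
      exact hTfix p hp
  -- the monoid homomorphism from the Klein four group
  have hmapmul : ∀ a b : Multiplicative (ZMod 2 × ZMod 2),
      Fano12.TP xp.1 yp.1 (Fano12.vvf xp.1 yp.1 (a * b).toAdd) (Fano12.Dvv_wm xp.1 yp.1 (a * b).toAdd) =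
        Fano12.TP xp.1 yp.1 (Fano12.vvf xp.1 yp.1 a.toAdd) (Fano12.Dvv_wm xp.1 yp.1 a.toAdd) *
          Fano12.TP xp.1 yp.1 (Fano12.vvf xp.1 yp.1 b.toAdd) (Fano12.Dvv_wm xp.1 yp.1 b.toAdd) := by
    intro a b
    apply Equiv.ext
    intro u
    apply Subtype.ext
    show Fano12.TV xp.1 yp.1 (Fano12.vvf xp.1 yp.1 (a * b).toAdd) u.1 =
      Fano12.TV xp.1 yp.1 (Fano12.vvf xp.1 yp.1 a.toAdd)
        (Fano12.TV xp.1 yp.1 (Fano12.vvf xp.1 yp.1 b.toAdd) u.1)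
    rw [toAdd_mul, Fano12.Dvv_add]
    exact Fano12.TV_comp xp.1 yp.1 _ _ (Fano12.Dvv_wm xp.1 yp.1 _) (Fano12.Dvv_wm xp.1 yp.1 _) u.1
  set ψ : Multiplicative (ZMod 2 × ZMod 2) →* Equiv.Perm FanoPoint :=
    MonoidHom.mk' (fun p => Fano12.TP xp.1 yp.1 (Fano12.vvf xp.1 yp.1 p.toAdd)
      (Fano12.Dvv_wm xp.1 yp.1 p.toAdd)) hmapmul with hψ
  have hψinj : Function.Injective ψ := by
    intro a b hab
    have h1 := congrArg (fun e : Equiv.Perm FanoPoint => (e ⟨w, hw0⟩).1) hab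
    have h2 : Fano12.TV xp.1 yp.1 (Fano12.vvf xp.1 yp.1 a.toAdd) w =
        Fano12.TV xp.1 yp.1 (Fano12.vvf xp.1 yp.1 b.toAdd) w := h1
    rw [Fano12.TV_nwm hww, Fano12.TV_nwm hww] at h2
    have h3 := add_left_cancel h2
    have h4 := Fano12.Dvv_inj xp.1 yp.1 a.toAdd b.toAdd hx hy hxy h3
    exact Multiplicative.toAdd.injective h4
  have hrange : ψ.range = Gdelta δ ⊓ fixingSubgroup (Equiv.Perm FanoPoint) L := by
    apply le_antisymm
    · rintro f ⟨p, rfl⟩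
      exact hTmem (Fano12.vvf xp.1 yp.1 (Multiplicative.toAdd p)) (Fano12.Dvv_wm xp.1 yp.1 (Multiplicative.toAdd p))
    · intro f hf
      obtain ⟨hfG, hffix⟩ := Subgroup.mem_inf.mp hf
      obtain ⟨hfano, -⟩ := (hGmem f).mp hfG
      have hfix : ∀ p ∈ L, f p = p := fun p hp => (mem_fixingSubgroup_iff (Equiv.Perm FanoPoint)).mp hffix p hp
      -- linearity of f
      have hlin : ∀ (p q : FanoPoint) (hne : p.1 ≠ q.1),
          (f ⟨p.1 + q.1, Fano12.Dnz p.1 q.1 hne⟩).1 = (f p).1 + (f q).1 := by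
        intro p q hne
        have hL0 : IsFanoLine {z : FanoPoint | z.1 = p.1 ∨ z.1 = q.1 ∨ z.1 = p.1 + q.1} :=
          ⟨p, q, fun h => hne (congrArg Subtype.val h), rfl⟩
        obtain ⟨r, s, hrs, himg⟩ := hfano _ hL0
        have hrsv : r.1 ≠ s.1 := fun h => hrs (Subtype.ext h)
        have hmem_p : (f p).1 = r.1 ∨ (f p).1 = s.1 ∨ (f p).1 = r.1 + s.1 := by
          have hm : f p ∈ ⇑f '' {z : FanoPoint | z.1 = p.1 ∨ z.1 = q.1 ∨ z.1 = p.1 + q.1} :=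
            ⟨p, Or.inl rfl, rfl⟩
          rw [himg] at hm
          exact hm
        have hmem_q : (f q).1 = r.1 ∨ (f q).1 = s.1 ∨ (f q).1 = r.1 + s.1 := by
          have hm : f q ∈ ⇑f '' {z : FanoPoint | z.1 = p.1 ∨ z.1 = q.1 ∨ z.1 = p.1 + q.1} :=
            ⟨q, Or.inr (Or.inl rfl), rfl⟩
          rw [himg] at hm
          exact hm
        have hmem_pq : (f ⟨p.1 + q.1, Fano12.Dnz p.1 q.1 hne⟩).1 = r.1 ∨
            (f ⟨p.1 + q.1, Fano12.Dnz p.1 q.1 hne⟩).1 = s.1 ∨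
            (f ⟨p.1 + q.1, Fano12.Dnz p.1 q.1 hne⟩).1 = r.1 + s.1 := by
          have hm : f ⟨p.1 + q.1, Fano12.Dnz p.1 q.1 hne⟩ ∈
              ⇑f '' {z : FanoPoint | z.1 = p.1 ∨ z.1 = q.1 ∨ z.1 = p.1 + q.1} :=
            ⟨⟨p.1 + q.1, Fano12.Dnz p.1 q.1 hne⟩, Or.inr (Or.inr rfl), rfl⟩
          rw [himg] at hm
          exact hm
        have hab : (f p).1 ≠ (f q).1 := by
          intro h
          have h2 := f.injective (Subtype.ext h)
          exact hne (congrArg Subtype.val h2)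
        obtain ⟨er, es, ers⟩ := Fano12.Dline2 r.1 s.1 (f p).1 (f q).1 r.2 s.2 hrsv hmem_p hmem_q hab
        have hpq_p : (f ⟨p.1 + q.1, Fano12.Dnz p.1 q.1 hne⟩).1 ≠ (f p).1 := by
          intro h
          have h2 := congrArg Subtype.val (f.injective (Subtype.ext h))
          exact Fano12.Dne p.1 q.1 q.2 h2
        have hpq_q : (f ⟨p.1 + q.1, Fano12.Dnz p.1 q.1 hne⟩).1 ≠ (f q).1 := by
          intro h
          have h2 := congrArg Subtype.val (f.injective (Subtype.ext h))
          have h3 : p.1 + q.1 = q.1 := h2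
          rw [add_comm] at h3
          exact Fano12.Dne q.1 p.1 p.2 h3
        have htri : (f ⟨p.1 + q.1, Fano12.Dnz p.1 q.1 hne⟩).1 = (f p).1 ∨
            (f ⟨p.1 + q.1, Fano12.Dnz p.1 q.1 hne⟩).1 = (f q).1 ∨
            (f ⟨p.1 + q.1, Fano12.Dnz p.1 q.1 hne⟩).1 = (f p).1 + (f q).1 := by
          rcases hmem_pq with h | h | h
          · rw [h]; exact er
          · rw [h]; exact es
          · rw [h]; exact ers
        rcases htri with h | h | h
        · exact absurd h hpq_p
        · exact absurd h hpq_q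
        · exact h
      have hfW_nw : ¬ Fano12.wm xp.1 yp.1 (f ⟨w, hw0⟩).1 := by
        intro h
        have hmem2 : f ⟨w, hw0⟩ ∈ L := (hmemL _).mpr h
        have h1 : f (f ⟨w, hw0⟩) = f ⟨w, hw0⟩ := hfix _ hmem2
        have h2 := f.injective h1
        rw [h2] at hmem2
        exact hww ((hmemL _).mp hmem2)
      have hvW : Fano12.wm xp.1 yp.1 (w + (f ⟨w, hw0⟩).1) :=
        Fano12.Dw3 xp.1 yp.1 w (f ⟨w, hw0⟩).1 hx hy hxy hww hfW_nw
      obtain ⟨pp, hpp⟩ := Fano12.Dvv_surj xp.1 yp.1 (w + (f ⟨w, hw0⟩).1) hx hy hxy hvW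
      refine ⟨Multiplicative.ofAdd pp, ?_⟩
      apply Equiv.ext
      intro u
      apply Subtype.ext
      show Fano12.TV xp.1 yp.1 (Fano12.vvf xp.1 yp.1 pp) u.1 = (f u).1
      rw [hpp]
      by_cases hu : Fano12.wm xp.1 yp.1 u.1
      · rw [Fano12.TV_wm hu, hfix u ((hmemL u).mpr hu)]
      · rw [Fano12.TV_nwm hu]
        have hgen : ∀ s : Fano12.V, (s = xp.1 ∨ s = yp.1 ∨ s = xp.1 + yp.1) → u.1 = w + s →
            u.1 + (w + (f ⟨w, hw0⟩).1) = (f u).1 := by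
          intro s hs hus
          have hsplit := (Fano12.Dlw xp.1 yp.1 s hx hy hxy).mp hs
          have hs0 : s ≠ 0 := hsplit.2
          have hsW : Fano12.wm xp.1 yp.1 s := hsplit.1
          have hwns : w ≠ s := fun h => hww (h ▸ hsW)
          have hueq : u = ⟨w + s, Fano12.Dnz w s hwns⟩ := Subtype.ext hus
          have hl := hlin ⟨w, hw0⟩ ⟨s, hs0⟩ hwns
          have hfs : f ⟨s, hs0⟩ = ⟨s, hs0⟩ :=
            hfix ⟨s, hs0⟩ ((hmemL ⟨s, hs0⟩).mpr hsW)
          rw [hueq]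
          show (w + s) + (w + (f ⟨w, hw0⟩).1) = (f ⟨w + s, Fano12.Dnz w s hwns⟩).1
          rw [hl, hfs]
          show (w + s) + (w + (f ⟨w, hw0⟩).1) = (f ⟨w, hw0⟩).1 + s
          exact Fano12.Dgen w s (f ⟨w, hw0⟩).1
        rcases Fano12.Doff xp.1 yp.1 w u.1 hx hy hxy hww hu with h | h | h | h
        · have hueq : u = ⟨w, hw0⟩ := Subtype.ext h
          rw [hueq]
          show w + (w + (f ⟨w, hw0⟩).1) = (f ⟨w, hw0⟩).1
          exact Fano12.Dcancel w _
        · exact hgen xp.1 (Or.inl rfl) h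
        · exact hgen yp.1 (Or.inr (Or.inl rfl)) h
        · exact hgen (xp.1 + yp.1) (Or.inr (Or.inr rfl)) h
  have e : Multiplicative (ZMod 2 × ZMod 2) ≃*
      ↥(Gdelta δ ⊓ fixingSubgroup (Equiv.Perm FanoPoint) L) :=
    (MonoidHom.ofInjective hψinj).trans (MulEquiv.subgroupCongr hrange)
  refine ⟨?_, ⟨e.symm⟩, ?_⟩
  · rw [← Nat.card_congr e.toEquiv, Nat.card_congr Multiplicative.toAdd, Nat.card_prod,
      Nat.card_zmod]
  · intro g hg n hn
    obtain ⟨hnG, hnfix⟩ := Subgroup.mem_inf.mp hn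
    obtain ⟨hgano, hgdl⟩ := (hGmem g).mp hg
    have hgL : ⇑g '' L = L :=
      hLuniq _ (hgano L ⟨xp, yp, hnexy, hLeq⟩) (hgdl L ⟨M, hM, hLM⟩)
    refine Subgroup.mem_inf.mpr ⟨mul_mem (mul_mem hg hnG) (inv_mem hg), ?_⟩
    rw [mem_fixingSubgroup_iff]
    intro p hp
    have hpinv : g⁻¹ p ∈ L := by
      rw [← hgL] at hp
      obtain ⟨q, hq, hqe⟩ := hp
      rw [← hqe]
      simpa using hq
    have hfixn : n (g⁻¹ p) = g⁻¹ p := (mem_fixingSubgroup_iff (Equiv.Perm FanoPoint)).mp hnfix _ hpinv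
    show (g * n * g⁻¹) p = p
    rw [Equiv.Perm.mul_apply, Equiv.Perm.mul_apply, hfixn]
    simp
end
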